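/- Let A be a definite max-plus matrix. Then eig(A) = {x ∈ R_max^n : A_{ij} ≤ x_i - x_j for all i ≠ j with A_{ij} = A*_{ij} and x_j finite}; that is, the eigenspace is cut out by the inequalities A_{ij} + x_j ≤ x_i ranging only over those off-diagonal entries which are 'optimal' (coincide with the corresponding entry of the closure), and conversely each such x satisfies all the inequalities A_{ij} + x_j ≤ x_i. -/

import Mathlib

/-!
Since every cycle has nonpositive weight, `A*` is a maximum of finitely many powers, so
`A* p q` is the weight of a walk from `p` to `q`, and every edge `(i, j)` of that walk is tight:
`A* p q ≤ A* p i + A i j + A* j q`. If all tight edges satisfy their inequality, chaining them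
along the walk gives `A p q + x q ≤ A* p q + x q ≤ x p`. As `A* p i + A* i j + A* j q ≤ A* p q`,
a tight edge with `A i j < A* i j` can only occur when `A* p i + A* j q = ⊤`. This relation
between the pairs `(i, j)` and `(p, q)` is transitive and, because `A* a a ≤ 0`, irreflexive, so
it is well founded, and well-founded induction along it derives every inequality from the
optimal ones.
-/

namespace MaxPlus

/-- Max-plus (tropical) matrix product over `EReal` (`⊥ = -∞` is the max-plus zero,
`+` is the max-plus multiplication, `⊔`/`⨆` is the max-plus addition). -/
noncomputable def mmul {n : ℕ} (A B : Matrix (Fin n) (Fin n) EReal) : Matrix (Fin n) (Fin n) EReal :=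
  fun i j => ⨆ k, A i k + B k j

/-- The max-plus identity matrix. -/
noncomputable def mId (n : ℕ) : Matrix (Fin n) (Fin n) EReal := fun i j => if i = j then 0 else ⊥

/-- Max-plus matrix powers. -/
noncomputable def mpow {n : ℕ} (A : Matrix (Fin n) (Fin n) EReal) : ℕ → Matrix (Fin n) (Fin n) EReal
  | 0 => mId n
  | m + 1 => mmul (mpow A m) A

/-- The max-plus Kleene star `A* = I ⊕ A ⊕ A² ⊕ ⋯` (entrywise supremum of all powers). -/
noncomputable def mstar {n : ℕ} (A : Matrix (Fin n) (Fin n) EReal) : Matrix (Fin n) (Fin n) EReal :=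
  fun i j => ⨆ m, mpow A m i j

/-- Weight of the cycle determined by the list `l = [i₁,…,i_k]`,
namely `A i₁ i₂ + ⋯ + A i_k i₁`. -/
noncomputable def cycleWeight {n : ℕ} (A : Matrix (Fin n) (Fin n) EReal) (l : List (Fin n)) : EReal :=
  ((l.zip (l.rotate 1)).map fun p => A p.1 p.2).sum

/-- A nonempty list of pairwise distinct indices, representing an elementary cycle. -/
def IsCycle {n : ℕ} (l : List (Fin n)) : Prop := l ≠ [] ∧ l.Nodup

/-- All elementary cycles have nonpositive weight, i.e. the maximal cycle mean `λ(A) ≤ 0`. -/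
def CycleBound {n : ℕ} (A : Matrix (Fin n) (Fin n) EReal) : Prop :=
  ∀ l : List (Fin n), IsCycle l → cycleWeight A l ≤ 0

/-- A definite matrix: maximal cycle mean `0` and zero (max-plus unit) diagonal.
(The diagonal entries give cycles of weight `0`, so `λ(A) = 0` is equivalent to
`CycleBound A` here.) -/
def Definite {n : ℕ} (A : Matrix (Fin n) (Fin n) EReal) : Prop :=
  CycleBound A ∧ ∀ i, A i i = 0

/-- Max-plus action of a matrix on a vector: `(A ⊙ x)_i = max_j (A_{ij} + x_j)`. -/
noncomputable def mapVec {n : ℕ} (A : Matrix (Fin n) (Fin n) EReal) (x : Fin n → EReal) :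
    Fin n → EReal :=
  fun i => ⨆ j, A i j + x j

/-- The max-plus eigenspace of `A` for the eigenvalue `0`. -/
def eig {n : ℕ} (A : Matrix (Fin n) (Fin n) EReal) : Set (Fin n → EReal) :=
  {x | mapVec A x = x}

/-- The max-plus column span of a matrix. -/
def mspan {n : ℕ} (A : Matrix (Fin n) (Fin n) EReal) : Set (Fin n → EReal) :=
  {y | ∃ α : Fin n → EReal, y = fun i => ⨆ j, α j + A i j}

lemma _root_.List.getLastD_append {α : Type*} (l₁ l₂ : List α) (a : α) :
    (l₁ ++ l₂).getLastD a = l₂.getLastD (l₁.getLastD a) := by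
  simp [List.getLastD_eq_getLast?, List.getLast?_append]

lemma _root_.List.exists_eq_append_append_of_not_nodup {α : Type*} {l : List α}
    (h : ¬ l.Nodup) : ∃ l₁ u l₂ l₃, l = (l₁ ++ [u]) ++ (l₂ ++ [u]) ++ l₃ := by
  induction l with
  | nil => simp at h
  | cons a t ih =>
    by_cases ha : a ∈ t
    · obtain ⟨s, s', rfl⟩ := List.append_of_mem ha
      exact ⟨[], a, s, s', by simp⟩
    · obtain ⟨l₁, u, l₂, l₃, rfl⟩ := ih fun hn => h (List.nodup_cons.2 ⟨ha, hn⟩)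
      exact ⟨a :: l₁, u, l₂, l₃, by simp⟩

lemma _root_.EReal.eq_bot_or_eq_top_of_add_le_add {a b c : EReal} (hbc : b < c)
    (h : a + c ≤ a + b) : a = ⊥ ∨ a = ⊤ := by
  induction a using EReal.rec with
  | bot => exact Or.inl rfl
  | coe r => exact absurd h (not_le.2 (EReal.add_lt_add_left_coe hbc r))
  | top => exact Or.inr rfl

section Walks

variable {n : ℕ} (A : Matrix (Fin n) (Fin n) EReal)

/-- The weight of the walk that starts at `a` and then visits the vertices of `l` in turn;
it ends at `l.getLastD a`. -/
noncomputable def walkWeight : Fin n → List (Fin n) → EReal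
  | _, [] => 0
  | a, b :: l => A a b + walkWeight b l

@[simp] lemma walkWeight_nil (a : Fin n) : walkWeight A a [] = 0 := rfl

@[simp] lemma walkWeight_cons (a b : Fin n) (l : List (Fin n)) :
    walkWeight A a (b :: l) = A a b + walkWeight A b l := rfl

lemma walkWeight_append (a : Fin n) (l₁ l₂ : List (Fin n)) :
    walkWeight A a (l₁ ++ l₂) = walkWeight A a l₁ + walkWeight A (l₁.getLastD a) l₂ := by
  induction l₁ generalizing a with
  | nil => simp
  | cons b l ih =>
    rw [List.cons_append, walkWeight_cons, walkWeight_cons, ih, List.getLastD_cons, add_assoc]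

lemma walkWeight_concat (a b : Fin n) (l : List (Fin n)) :
    walkWeight A a (l ++ [b]) = walkWeight A a l + A (l.getLastD a) b := by
  simp [walkWeight_append]

lemma walkWeight_append_closed_append {a : Fin n} (l₁ l₂ l₃ : List (Fin n))
    (hl₂ : l₂.getLastD (l₁.getLastD a) = l₁.getLastD a) :
    walkWeight A a (l₁ ++ l₂ ++ l₃) =
      walkWeight A a (l₁ ++ l₃) + walkWeight A (l₁.getLastD a) l₂ := by
  rw [List.append_assoc, walkWeight_append, walkWeight_append, walkWeight_append, hl₂]
  ac_rfl

lemma cycleWeight_cons (a : Fin n) (t : List (Fin n)) :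
    cycleWeight A (a :: t) = walkWeight A a (t ++ [a]) := by
  suffices h : ∀ b c : Fin n, ((List.zip (b :: t) (t ++ [c])).map fun p => A p.1 p.2).sum =
      walkWeight A b (t ++ [c]) by
    simpa [cycleWeight] using h a a
  induction t with
  | nil => simp
  | cons d t ih => intro b c; simp [ih]

end Walks

section Powers

variable {n : ℕ} (A : Matrix (Fin n) (Fin n) EReal)

lemma mpow_zero_apply (a b : Fin n) : mpow A 0 a b = if a = b then 0 else ⊥ := rfl

lemma exists_mpow_succ_apply_eq (m : ℕ) (a b : Fin n) :
    ∃ k, mpow A (m + 1) a b = mpow A m a k + A k b := by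
  have : Nonempty (Fin n) := ⟨a⟩
  obtain ⟨k, hk⟩ := Finite.exists_max fun k => mpow A m a k + A k b
  exact ⟨k, le_antisymm (iSup_le hk) (le_iSup (fun k => mpow A m a k + A k b) k)⟩

lemma mpow_one_apply (a b : Fin n) : mpow A 1 a b = A a b := by
  obtain ⟨k, hk⟩ := exists_mpow_succ_apply_eq A 0 a b
  refine le_antisymm ?_ ?_
  · rw [hk, mpow_zero_apply]
    split_ifs with h <;> simp [h]
  · calc A a b = mpow A 0 a a + A a b := by simp [mpow_zero_apply]
      _ ≤ mpow A 1 a b := le_iSup (fun k => mpow A 0 a k + A k b) a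

lemma mpow_add_le (m k : ℕ) (a b c : Fin n) :
    mpow A m a b + mpow A k b c ≤ mpow A (m + k) a c := by
  induction k generalizing c with
  | zero =>
    rw [mpow_zero_apply]
    split_ifs with h
    · rw [h, add_zero, add_zero]
    · simp
  | succ k ih =>
    obtain ⟨j, hj⟩ := exists_mpow_succ_apply_eq A k b c
    calc mpow A m a b + mpow A (k + 1) b c = mpow A m a b + mpow A k b j + A j c := by
          rw [hj, add_assoc]
      _ ≤ mpow A (m + k) a j + A j c := by gcongr; exact ih j
      _ ≤ mpow A (m + k + 1) a c := le_iSup (fun i => mpow A (m + k) a i + A i c) j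

lemma walkWeight_le_mpow (a : Fin n) (l : List (Fin n)) :
    walkWeight A a l ≤ mpow A l.length a (l.getLastD a) := by
  induction l generalizing a with
  | nil => simp [mpow_zero_apply]
  | cons b l ih =>
    rw [walkWeight_cons, List.getLastD_cons, List.length_cons, add_comm l.length,
      ← mpow_one_apply A a b]
    exact (add_le_add le_rfl (ih b)).trans (mpow_add_le A 1 _ a b _)

lemma exists_walk_mpow_le (m : ℕ) (a b : Fin n) :
    ∃ l : List (Fin n), l.getLastD a = b ∧ mpow A m a b ≤ walkWeight A a l := by
  induction m generalizing b with
  | zero =>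
    by_cases h : a = b
    · exact ⟨[], h, by simp [mpow_zero_apply, h]⟩
    · exact ⟨[b], rfl, by simp [mpow_zero_apply, h]⟩
  | succ m ih =>
    obtain ⟨k, hk⟩ := exists_mpow_succ_apply_eq A m a b
    obtain ⟨l, hl, hle⟩ := ih k
    refine ⟨l ++ [b], List.getLastD_concat, ?_⟩
    rw [hk, walkWeight_concat, hl]
    gcongr

lemma mpow_le_mstar (m : ℕ) (a b : Fin n) : mpow A m a b ≤ mstar A a b :=
  le_iSup (fun m => mpow A m a b) m

lemma le_mstar (a b : Fin n) : A a b ≤ mstar A a b :=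
  mpow_one_apply A a b ▸ mpow_le_mstar A 1 a b

lemma zero_le_mstar_self (a : Fin n) : 0 ≤ mstar A a a := by
  simpa [mpow_zero_apply] using mpow_le_mstar A 0 a a

end Powers

section CycleBound

variable {n : ℕ} {A : Matrix (Fin n) (Fin n) EReal}

lemma walkWeight_nonpos_of_nodup (hc : CycleBound A) {a : Fin n} {l : List (Fin n)}
    (hl : l.getLastD a = a) (hnd : l.Nodup) : walkWeight A a l ≤ 0 := by
  rcases l.eq_nil_or_concat' with rfl | ⟨t, b, rfl⟩
  · simp
  · rw [List.getLastD_concat] at hl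
    subst hl
    rw [← cycleWeight_cons]
    exact hc _ ⟨List.cons_ne_nil _ _, List.nodup_append_comm.1 hnd⟩

lemma exists_nodup_walk_le (hc : CycleBound A) (a : Fin n) (l : List (Fin n)) :
    ∃ l' : List (Fin n), l'.getLastD a = l.getLastD a ∧ l'.Nodup ∧
      walkWeight A a l ≤ walkWeight A a l' := by
  by_cases hnd : l.Nodup
  · exact ⟨l, rfl, hnd, le_rfl⟩
  obtain ⟨l₁, u, l₂, l₃, hl⟩ := List.exists_eq_append_append_of_not_nodup hnd
  subst hl
  have hu : (l₁ ++ [u]).getLastD a = u := List.getLastD_concat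
  obtain ⟨c, hc_end, hc_nd, hc_le⟩ := exists_nodup_walk_le hc u (l₂ ++ [u])
  obtain ⟨l', hl'_end, hl'_nd, hl'_le⟩ := exists_nodup_walk_le hc a (l₁ ++ [u] ++ l₃)
  refine ⟨l', ?_, hl'_nd, ?_⟩
  · simp only [hl'_end, List.getLastD_append, List.getLastD_cons, List.getLastD_nil]
  · rw [walkWeight_append_closed_append A _ _ _ (by rw [hu]; exact List.getLastD_concat), hu,
      ← add_zero (walkWeight A a l')]
    exact add_le_add hl'_le
      (hc_le.trans (walkWeight_nonpos_of_nodup hc (hc_end.trans List.getLastD_concat) hc_nd))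
termination_by l.length
decreasing_by
  all_goals subst_vars; simp only [List.length_append, List.length_singleton]; omega

lemma exists_mpow_eq_mstar (hc : CycleBound A) (a b : Fin n) :
    ∃ m, mstar A a b = mpow A m a b := by
  obtain ⟨k, hk⟩ := Finite.exists_max fun k : Fin (n + 1) => mpow A k a b
  refine ⟨k, le_antisymm (iSup_le fun m => ?_) (mpow_le_mstar A k a b)⟩
  obtain ⟨l, hl_end, hl_le⟩ := exists_walk_mpow_le A m a b
  obtain ⟨l', hl'_end, hl'_nd, hl'_le⟩ := exists_nodup_walk_le hc a l
  have hlen : l'.length < n + 1 := Nat.lt_succ_of_le (by simpa using hl'_nd.length_le_card)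
  calc mpow A m a b ≤ walkWeight A a l' := hl_le.trans hl'_le
    _ ≤ mpow A l'.length a b := hl_end ▸ hl'_end ▸ walkWeight_le_mpow A a l'
    _ ≤ mpow A k a b := hk ⟨l'.length, hlen⟩

lemma mstar_self_nonpos (hc : CycleBound A) (a : Fin n) : mstar A a a ≤ 0 := by
  refine iSup_le fun m => ?_
  obtain ⟨l, hl_end, hl_le⟩ := exists_walk_mpow_le A m a a
  obtain ⟨l', hl'_end, hl'_nd, hl'_le⟩ := exists_nodup_walk_le hc a l
  exact hl_le.trans (hl'_le.trans (walkWeight_nonpos_of_nodup hc (hl'_end.trans hl_end) hl'_nd))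

lemma mstar_add_mstar_le (hc : CycleBound A) (a b c : Fin n) :
    mstar A a b + mstar A b c ≤ mstar A a c := by
  obtain ⟨m, hm⟩ := exists_mpow_eq_mstar hc a b
  obtain ⟨k, hk⟩ := exists_mpow_eq_mstar hc b c
  rw [hm, hk]
  exact (mpow_add_le A m k a b c).trans (mpow_le_mstar A _ a c)

lemma mpow_add_le_of_tight (hc : CycleBound A) {x : Fin n → EReal} {p q : Fin n}
    (h : ∀ i j, mstar A p q ≤ mstar A p i + A i j + mstar A j q → A i j + x j ≤ x i)
    (m : ℕ) (j : Fin n) (hj : mstar A p q ≤ mpow A m p j + mstar A j q) :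
    mpow A m p j + x j ≤ x p := by
  induction m generalizing j with
  | zero =>
    rw [mpow_zero_apply]
    split_ifs with hpj
    · rw [hpj, zero_add]
    · simp
  | succ m ih =>
    obtain ⟨i, hi⟩ := exists_mpow_succ_apply_eq A m p j
    rw [hi] at hj ⊢
    have hij : A i j + x j ≤ x i := h i j (hj.trans (by gcongr; exact mpow_le_mstar A m p i))
    have hiq : mstar A p q ≤ mpow A m p i + mstar A i q := by
      refine hj.trans ?_
      rw [add_assoc]
      gcongr
      exact (add_le_add (le_mstar A i j) le_rfl).trans (mstar_add_mstar_le hc i j q)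
    calc mpow A m p i + A i j + x j = mpow A m p i + (A i j + x j) := add_assoc ..
      _ ≤ mpow A m p i + x i := by gcongr
      _ ≤ x p := ih i hiq

lemma mstar_add_le_of_tight (hc : CycleBound A) {x : Fin n → EReal} {p q : Fin n}
    (h : ∀ i j, mstar A p q ≤ mstar A p i + A i j + mstar A j q → A i j + x j ≤ x i) :
    mstar A p q + x q ≤ x p := by
  obtain ⟨m, hm⟩ := exists_mpow_eq_mstar hc p q
  rw [hm]
  refine mpow_add_le_of_tight hc h m q ?_
  calc mstar A p q = mpow A m p q + 0 := by rw [hm, add_zero]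
    _ ≤ mpow A m p q + mstar A q q := by gcongr; exact zero_le_mstar_self A q

variable (A) in
/-- `e` lies on a walk from `f.1` to `f.2` whose part outside `e` already has weight `⊤`. -/
def TopInside (e f : Fin n × Fin n) : Prop := mstar A f.1 e.1 + mstar A e.2 f.2 = ⊤

lemma wellFounded_topInside (hc : CycleBound A) : WellFounded (TopInside A) := by
  have : IsTrans _ (TopInside A) := ⟨fun e f g hef hfg => top_unique <|
    calc ⊤ = (mstar A g.1 f.1 + mstar A f.2 g.2) + (mstar A f.1 e.1 + mstar A e.2 f.2) := by
          rw [hfg, hef, EReal.top_add_top]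
      _ = (mstar A g.1 f.1 + mstar A f.1 e.1) + (mstar A e.2 f.2 + mstar A f.2 g.2) := by ac_rfl
      _ ≤ mstar A g.1 e.1 + mstar A e.2 g.2 :=
          add_le_add (mstar_add_mstar_le hc _ _ _) (mstar_add_mstar_le hc _ _ _)⟩
  have : Std.Irrefl (TopInside A) := ⟨fun e he => by
    have := add_nonpos (mstar_self_nonpos hc e.1) (mstar_self_nonpos hc e.2)
    rw [show mstar A e.1 e.1 + mstar A e.2 e.2 = ⊤ from he] at this
    simp at this⟩
  exact Finite.wellFounded_of_trans_of_irrefl _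

lemma topInside_of_tight (hc : CycleBound A) {p q i j : Fin n} (hpq : mstar A p q ≠ ⊥)
    (htight : mstar A p q ≤ mstar A p i + A i j + mstar A j q) (hij : A i j < mstar A i j) :
    TopInside A (i, j) (p, q) := by
  have hle : (mstar A p i + mstar A j q) + mstar A i j ≤ (mstar A p i + mstar A j q) + A i j :=
    calc (mstar A p i + mstar A j q) + mstar A i j = mstar A p i + mstar A i j + mstar A j q :=
          add_right_comm ..
      _ ≤ mstar A p q :=
          (add_le_add (mstar_add_mstar_le hc p i j) le_rfl).trans (mstar_add_mstar_le hc p j q)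
      _ ≤ (mstar A p i + mstar A j q) + A i j := htight.trans_eq (add_right_comm ..)
  rcases EReal.eq_bot_or_eq_top_of_add_le_add hij hle with hbot | htop
  · refine absurd (le_bot_iff.1 ?_) hpq
    calc mstar A p q ≤ mstar A p i + A i j + mstar A j q := htight
      _ = ⊥ := by rw [add_right_comm, hbot, EReal.bot_add]
  · exact htop

end CycleBound

section Eigenvectors

variable {n : ℕ} {A : Matrix (Fin n) (Fin n) EReal} {x : Fin n → EReal}

lemma add_le_of_optimal (hd : Definite A)
    (hx : ∀ i j, i ≠ j → A i j = mstar A i j → A i j + x j ≤ x i) {i j : Fin n}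
    (hopt : A i j = mstar A i j) : A i j + x j ≤ x i := by
  rcases eq_or_ne i j with rfl | hij
  · rw [hd.2 i, zero_add]
  · exact hx i j hij hopt

lemma add_le_of_forall_optimal (hd : Definite A)
    (hx : ∀ i j, i ≠ j → A i j = mstar A i j → A i j + x j ≤ x i) (p q : Fin n) :
    A p q + x q ≤ x p := by
  suffices ∀ e : Fin n × Fin n, A e.1 e.2 + x e.2 ≤ x e.1 from this (p, q)
  intro e
  induction e using WellFounded.induction (wellFounded_topInside hd.1) with
  | _ e ih =>
    obtain ⟨p, q⟩ := e
    by_cases hopt : A p q = mstar A p q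
    · exact add_le_of_optimal hd hx hopt
    have hlt : A p q < mstar A p q := lt_of_le_of_ne (le_mstar A p q) hopt
    refine (add_le_add (le_mstar A p q) le_rfl).trans
      (mstar_add_le_of_tight hd.1 fun i j htight => ?_)
    by_cases hij : A i j = mstar A i j
    · exact add_le_of_optimal hd hx hij
    · exact ih (i, j) (topInside_of_tight hd.1 (ne_bot_of_gt hlt) htight
        (lt_of_le_of_ne (le_mstar A i j) hij))

end Eigenvectors

/-- The eigenspace of a definite matrix is cut out by the inequalities
`A_{ij} + x_j ≤ x_i` taken only over the "optimal" off-diagonal entries, those with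
`A_{ij} = A*_{ij}` (and each such `x` in fact satisfies all the inequalities). -/
theorem eig_eq_optimal_inequalities {n : ℕ} (A : Matrix (Fin n) (Fin n) EReal)
    (hd : Definite A) :
    eig A = {x : Fin n → EReal |
      ∀ i j, i ≠ j → A i j = mstar A i j → A i j + x j ≤ x i} := by
  ext x
  refine ⟨fun (hx : mapVec A x = x) i j _ _ => ?_,
    fun hx => (funext fun i => ?_ : mapVec A x = x)⟩
  · exact (le_iSup (fun k => A i k + x k) j).trans_eq (congrFun hx i)
  · refine le_antisymm (iSup_le fun j => add_le_of_forall_optimal hd hx i j) ?_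
    calc x i = A i i + x i := by rw [hd.2 i, zero_add]
      _ ≤ mapVec A x i := le_iSup (fun j => A i j + x j) i

end MaxPlus
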